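/- arXiv:2511.01542 — 2 statements merged into one kernel-verified Lean document; each statement's English description precedes it below -/
import Mathlib

section
/- Let u : ℝ² → ℝ be C³ near a point x ∈ ℝ² with ∂₁u(x) = 0, ∂₂u(x) ≠ 0, ∂₁₁u(x) = 0, ∂₁₂u(x) = 0. Define T(y) = (∂₂₂u(y)∂₁u(y) − ∂₁₂u(y)∂₂u(y), ∂₁₁u(y)∂₂u(y) − ∂₁₂u(y)∂₁u(y)). Then the Jacobian determinant of T at x equals −(∂₂u(x))² · ((∂₁₁₂u(x))² − ∂₁₁₁u(x)·∂₁₂₂u(x)). -/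
/-! By the product rule, every term of `DT(x)` with a factor `∂₁u(x)`, `∂₁₁u(x)` or `∂₁₂u(x)`
vanishes, leaving `DT(x) = ∂₂u(x) · [[-∂₁₁₂u, -∂₁₂₂u], [∂₁₁₁u, ∂₁₁₂u]]`, whose determinant is the
claimed one. The entry `∂₁T₁` produces `∂₁∂₂∂₁u`, which equals `∂₂∂₁∂₁u` by Schwarz's theorem
applied to the `C²` function `∂₁u`. -/

/-- First partial derivative in the `x₁` direction. -/
noncomputable def d1 (u : ℝ × ℝ → ℝ) (x : ℝ × ℝ) : ℝ :=
  deriv (fun t => u (t, x.2)) x.1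

/-- First partial derivative in the `x₂` direction. -/
noncomputable def d2 (u : ℝ × ℝ → ℝ) (x : ℝ × ℝ) : ℝ :=
  deriv (fun t => u (x.1, t)) x.2

open Filter Topology

section Partials

variable {f g h k : ℝ × ℝ → ℝ} {x : ℝ × ℝ}

lemma hasDerivAt_d1 (hf : DifferentiableAt ℝ f x) :
    HasDerivAt (fun t => f (t, x.2)) (d1 f x) x.1 :=
  (hf.comp x.1 (differentiableAt_id.prodMk (differentiableAt_const _))).hasDerivAt

lemma hasDerivAt_d2 (hf : DifferentiableAt ℝ f x) :
    HasDerivAt (fun t => f (x.1, t)) (d2 f x) x.2 :=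
  (hf.comp x.2 ((differentiableAt_const _).prodMk differentiableAt_id)).hasDerivAt

lemma d1_eq_fderiv (hf : DifferentiableAt ℝ f x) : d1 f x = fderiv ℝ f x (1, 0) :=
  (hf.hasFDerivAt.comp_hasDerivAt x.1 ((hasDerivAt_id x.1).prodMk (hasDerivAt_const _ _))).deriv

lemma d2_eq_fderiv (hf : DifferentiableAt ℝ f x) : d2 f x = fderiv ℝ f x (0, 1) :=
  (hf.hasFDerivAt.comp_hasDerivAt x.2 ((hasDerivAt_const _ _).prodMk (hasDerivAt_id x.2))).deriv

lemma Filter.EventuallyEq.d1_eq (hfg : f =ᶠ[𝓝 x] g) : d1 f x = d1 g x :=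
  (hfg.comp_tendsto (Continuous.tendsto' (by fun_prop) x.1 x rfl)).deriv_eq

lemma Filter.EventuallyEq.d2_eq (hfg : f =ᶠ[𝓝 x] g) : d2 f x = d2 g x :=
  (hfg.comp_tendsto (Continuous.tendsto' (by fun_prop) x.2 x rfl)).deriv_eq

lemma d1_eventuallyEq_fderiv {n : ℕ} (hf : ContDiffAt ℝ (n + 1) f x) :
    d1 f =ᶠ[𝓝 x] fun y => fderiv ℝ f y (1, 0) := by
  filter_upwards [hf.eventually (by simp)] with y hy
  exact d1_eq_fderiv (hy.differentiableAt (by simp))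

lemma d2_eventuallyEq_fderiv {n : ℕ} (hf : ContDiffAt ℝ (n + 1) f x) :
    d2 f =ᶠ[𝓝 x] fun y => fderiv ℝ f y (0, 1) := by
  filter_upwards [hf.eventually (by simp)] with y hy
  exact d2_eq_fderiv (hy.differentiableAt (by simp))

lemma ContDiffAt.d1 {n : ℕ} (hf : ContDiffAt ℝ (n + 1) f x) : ContDiffAt ℝ n (d1 f) x :=
  ((hf.fderiv_right le_rfl).clm_apply contDiffAt_const).congr_of_eventuallyEq
    (d1_eventuallyEq_fderiv hf)

lemma ContDiffAt.d2 {n : ℕ} (hf : ContDiffAt ℝ (n + 1) f x) : ContDiffAt ℝ n (d2 f) x :=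
  ((hf.fderiv_right le_rfl).clm_apply contDiffAt_const).congr_of_eventuallyEq
    (d2_eventuallyEq_fderiv hf)

lemma d1_d2_eq_d2_d1 (hf : ContDiffAt ℝ 2 f x) : d1 (d2 f) x = d2 (d1 f) x := by
  have hD : DifferentiableAt ℝ (fderiv ℝ f) x :=
    (hf.fderiv_right (m := 1) le_rfl).differentiableAt one_ne_zero
  have hD_apply (v : ℝ × ℝ) : DifferentiableAt ℝ (fun y => fderiv ℝ f y v) x :=
    hD.clm_apply (differentiableAt_const v)
  calc d1 (d2 f) x = fderiv ℝ (fderiv ℝ f) x (1, 0) (0, 1) := by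
        rw [(d2_eventuallyEq_fderiv (n := 1) hf).d1_eq, d1_eq_fderiv (hD_apply _),
          fderiv_clm_apply hD (differentiableAt_const _)]
        simp
    _ = fderiv ℝ (fderiv ℝ f) x (0, 1) (1, 0) := hf.isSymmSndFDerivAt (by simp) _ _
    _ = d2 (d1 f) x := by
        rw [(d1_eventuallyEq_fderiv (n := 1) hf).d2_eq, d2_eq_fderiv (hD_apply _),
          fderiv_clm_apply hD (differentiableAt_const _)]
        simp

lemma d1_mul_sub_mul (hf : DifferentiableAt ℝ f x) (hg : DifferentiableAt ℝ g x)
    (hh : DifferentiableAt ℝ h x) (hk : DifferentiableAt ℝ k x) :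
    d1 (fun y => f y * g y - h y * k y) x =
      d1 f x * g x + f x * d1 g x - (d1 h x * k x + h x * d1 k x) :=
  (((hasDerivAt_d1 hf).mul (hasDerivAt_d1 hg)).sub
    ((hasDerivAt_d1 hh).mul (hasDerivAt_d1 hk))).deriv

lemma d2_mul_sub_mul (hf : DifferentiableAt ℝ f x) (hg : DifferentiableAt ℝ g x)
    (hh : DifferentiableAt ℝ h x) (hk : DifferentiableAt ℝ k x) :
    d2 (fun y => f y * g y - h y * k y) x =
      d2 f x * g x + f x * d2 g x - (d2 h x * k x + h x * d2 k x) :=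
  (((hasDerivAt_d2 hf).mul (hasDerivAt_d2 hg)).sub
    ((hasDerivAt_d2 hh).mul (hasDerivAt_d2 hk))).deriv

end Partials

theorem jacobian_T_at_M_point_general (u : ℝ × ℝ → ℝ) (x : ℝ × ℝ)
    (hu : ContDiffAt ℝ 3 u x)
    (h1 : d1 u x = 0)
    (h11 : d1 (d1 u) x = 0) (h12 : d2 (d1 u) x = 0)
    (T1 T2 : ℝ × ℝ → ℝ)
    (hT1 : T1 = fun y => d2 (d2 u) y * d1 u y - d2 (d1 u) y * d2 u y)
    (hT2 : T2 = fun y => d1 (d1 u) y * d2 u y - d2 (d1 u) y * d1 u y) :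
    d1 T1 x * d2 T2 x - d2 T1 x * d1 T2 x =
      -(d2 u x) ^ 2 *
        ((d2 (d1 (d1 u)) x) ^ 2 - d1 (d1 (d1 u)) x * d2 (d2 (d1 u)) x) := by
  have hu1 : ContDiffAt ℝ 2 (d1 u) x := hu.d1 (n := 2)
  have hu2 : ContDiffAt ℝ 2 (d2 u) x := hu.d2 (n := 2)
  have D1 : DifferentiableAt ℝ (d1 u) x := hu1.differentiableAt two_ne_zero
  have D2 : DifferentiableAt ℝ (d2 u) x := hu2.differentiableAt two_ne_zero
  have D11 : DifferentiableAt ℝ (d1 (d1 u)) x := (hu1.d1 (n := 1)).differentiableAt one_ne_zero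
  have D21 : DifferentiableAt ℝ (d2 (d1 u)) x := (hu1.d2 (n := 1)).differentiableAt one_ne_zero
  have D22 : DifferentiableAt ℝ (d2 (d2 u)) x := (hu2.d2 (n := 1)).differentiableAt one_ne_zero
  subst hT1 hT2
  rw [d1_mul_sub_mul D22 D1 D21 D2, d2_mul_sub_mul D22 D1 D21 D2,
    d1_mul_sub_mul D11 D2 D21 D1, d2_mul_sub_mul D11 D2 D21 D1,
    d1_d2_eq_d2_d1 hu1, h1, h11, h12]
  ring

/-- Jacobian determinant of `T` at a degenerate directional critical point. -/
theorem jacobian_T_at_M_point (u : ℝ × ℝ → ℝ) (x : ℝ × ℝ)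
    (hu : ContDiffAt ℝ 3 u x)
    (h1 : d1 u x = 0) (h2 : d2 u x ≠ 0)
    (h11 : d1 (d1 u) x = 0) (h12 : d2 (d1 u) x = 0)
    (T1 T2 : ℝ × ℝ → ℝ)
    (hT1 : T1 = fun y => d2 (d2 u) y * d1 u y - d2 (d1 u) y * d2 u y)
    (hT2 : T2 = fun y => d1 (d1 u) y * d2 u y - d2 (d1 u) y * d1 u y) :
    d1 T1 x * d2 T2 x - d2 T1 x * d1 T2 x =
      -(d2 u x) ^ 2 *
        ((d2 (d1 (d1 u)) x) ^ 2 - d1 (d1 (d1 u)) x * d2 (d2 (d1 u)) x) :=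
  jacobian_T_at_M_point_general u x hu h1 h11 h12 T1 T2 hT1 hT2
end

section
/- Let Ω ⊂ ℝ² be a bounded open set, strictly star-shaped with respect to x₀ ∈ Ω, meaning ⟨x − x₀, ν(x)⟩ > 0 for all x ∈ ∂Ω where ν is the outward unit normal. Let u ∈ C²(Ω̄) satisfy ∇u ≠ 0 on ∂Ω, ∂u/∂ν < 0 on ∂Ω, and suppose the curvature 𝔎(x) = −(∂₂₂u(∂₁u)² − 2∂₁₂u ∂₁u ∂₂u + ∂₁₁u(∂₂u)²)/|∇u|³ is strictly positive at every point of ∂Ω. Define T(x) = (∂₂₂u ∂₁u − ∂₁₂u ∂₂u, ∂₁₁u ∂₂u − ∂₁₂u ∂₁u). Then the homotopy H(t,x) = tT(x) + (1−t)(x − x₀) satisfies H(t,x) ≠ 0 for all t ∈ [0,1] and x ∈ ∂Ω. -/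
/-- Admissibility of the homotopy between `T` and `x - x₀` on the boundary of a
strictly star-shaped domain with positive boundary curvature. -/
theorem homotopy_admissible (Ω : Set (ℝ × ℝ)) (hΩ : IsOpen Ω)
    (hbd : Bornology.IsBounded Ω) (x₀ : ℝ × ℝ) (hx₀ : x₀ ∈ Ω)
    (u : ℝ × ℝ → ℝ) (hu : ContDiffOn ℝ 2 u (closure Ω))
    (ν : ℝ × ℝ → ℝ × ℝ)
    (hνunit : ∀ x ∈ frontier Ω, (ν x).1 ^ 2 + (ν x).2 ^ 2 = 1)
    (hstar : ∀ x ∈ frontier Ω,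
      0 < (x - x₀).1 * (ν x).1 + (x - x₀).2 * (ν x).2)
    (hgrad : ∀ x ∈ frontier Ω, (d1 u x, d2 u x) ≠ (0, 0))
    (hneu : ∀ x ∈ frontier Ω, d1 u x * (ν x).1 + d2 u x * (ν x).2 < 0)
    (hpar : ∀ x ∈ frontier Ω,
      d1 u x = (d1 u x * (ν x).1 + d2 u x * (ν x).2) * (ν x).1 ∧
      d2 u x = (d1 u x * (ν x).1 + d2 u x * (ν x).2) * (ν x).2)
    (hcurv : ∀ x ∈ frontier Ω,
      0 < -(d2 (d2 u) x * (d1 u x) ^ 2 - 2 * d2 (d1 u) x * d1 u x * d2 u x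
              + d1 (d1 u) x * (d2 u x) ^ 2) /
            (Real.sqrt ((d1 u x) ^ 2 + (d2 u x) ^ 2)) ^ 3)
    (T : ℝ × ℝ → ℝ × ℝ)
    (hT : T = fun y =>
      (d2 (d2 u) y * d1 u y - d2 (d1 u) y * d2 u y,
       d1 (d1 u) y * d2 u y - d2 (d1 u) y * d1 u y)) :
    ∀ t ∈ Set.Icc (0 : ℝ) 1, ∀ x ∈ frontier Ω,
      t • T x + (1 - t) • (x - x₀) ≠ (0 : ℝ × ℝ) := by
  intro t ht x hx h
  have hg := hgrad x hx
  have hn := hneu x hx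
  have hs := hstar x hx
  have hc := hcurv x hx
  have hp := hpar x hx
  have hsq : 0 < (d1 u x) ^ 2 + (d2 u x) ^ 2 := by
    have hor : d1 u x ≠ 0 ∨ d2 u x ≠ 0 := by
      by_contra hcon
      push_neg at hcon
      exact hg (Prod.ext_iff.mpr ⟨hcon.1, hcon.2⟩)
    rcases hor with h1 | h2
    · positivity
    · positivity
  have hsqrt : 0 < (Real.sqrt ((d1 u x) ^ 2 + (d2 u x) ^ 2)) ^ 3 :=
    pow_pos (Real.sqrt_pos.mpr hsq) 3
  set S := d2 (d2 u) x * (d1 u x) ^ 2 - 2 * d2 (d1 u) x * d1 u x * d2 u x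
      + d1 (d1 u) x * (d2 u x) ^ 2 with hS
  have hSneg : S < 0 := by
    rcases div_pos_iff.mp hc with ⟨h1, _⟩ | ⟨_, h2⟩
    · linarith
    · linarith [hsqrt]
  have h1 : t * (T x).1 + (1 - t) * (x - x₀).1 = 0 := by
    have := congrArg Prod.fst h
    simpa using this
  have h2 : t * (T x).2 + (1 - t) * (x - x₀).2 = 0 := by
    have := congrArg Prod.snd h
    simpa using this
  have e1 : (T x).1 = d2 (d2 u) x * d1 u x - d2 (d1 u) x * d2 u x := by rw [hT]
  have e2 : (T x).2 = d1 (d1 u) x * d2 u x - d2 (d1 u) x * d1 u x := by rw [hT]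
  rw [e1] at h1
  rw [e2] at h2
  have hdot : t * S + (1 - t) * ((x - x₀).1 * d1 u x + (x - x₀).2 * d2 u x) = 0 := by
    rw [hS]
    linear_combination d1 u x * h1 + d2 u x * h2
  have hP : (x - x₀).1 * d1 u x + (x - x₀).2 * d2 u x < 0 := by
    have key : (x - x₀).1 * d1 u x + (x - x₀).2 * d2 u x
        = (d1 u x * (ν x).1 + d2 u x * (ν x).2)
          * ((x - x₀).1 * (ν x).1 + (x - x₀).2 * (ν x).2) := by
      linear_combination (x - x₀).1 * hp.1 + (x - x₀).2 * hp.2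
    rw [key]
    exact mul_neg_of_neg_of_pos hn hs
  rcases eq_or_lt_of_le ht.1 with h0 | h0
  · rw [← h0] at hdot
    linarith
  · have hts : t * S < 0 := mul_neg_of_pos_of_neg h0 hSneg
    have htp : (1 - t) * ((x - x₀).1 * d1 u x + (x - x₀).2 * d2 u x) ≤ 0 :=
      mul_nonpos_of_nonneg_of_nonpos (by linarith [ht.2]) hP.le
    linarith
end
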